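/- arXiv:1908.02634 — 6 statements merged into one kernel-verified Lean document; each statement's English description precedes it below -/
import Mathlib

section
/- Let ψ: ℝ → ℂ and h: ℝ → ℝ be integrable functions with ∫_ℝ h(u) du = 1, and suppose the function (s,t,u) ↦ h(u) ψ(s−u) conj(ψ(t−u)) is integrable on ℝ³. Define the kernel K(s,t) = ∫_ℝ h(u) ψ(s−u) conj(ψ(t−u)) du and its double Fourier transform 𝒦(f,f′) = ∫_ℝ ∫_ℝ K(s,t) e^{−i2πfs} e^{−i2πf′t} ds dt. Then for every f ∈ ℝ, 𝒦(f, −f) = |Ψ(f)|², where Ψ(f) = ∫_ℝ ψ(t) e^{−i2πft} dt. -/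
open MeasureTheory Complex

/-- The Fourier kernel `e^{-i 2 π x}`. -/
noncomputable def fker (x : ℝ) : ℂ := Complex.exp (-2 * Real.pi * x * Complex.I)

/-! The kernel integrates `h(u)` against `ψ_u(s) conj (ψ_u(t))` with `ψ_u = ψ(· - u)`. Modulating by
`e^{-i2πfs} e^{i2πft}` and integrating first in `s`, then in `t`, turns `ψ_u` into `e^{-i2πfu} Ψ(f)` and
`conj ψ_u` into its conjugate, so the phases cancel and the `u`-integrand is `h(u) |Ψ(f)|²`; the
condition `∫ h = 1` finishes. Integrability of the triple integrand justifies reversing the order of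
integration. -/

theorem integral_integral_integral_swap {α β γ E : Type*} [MeasurableSpace α] [MeasurableSpace β]
    [MeasurableSpace γ] {μ : Measure α} {ν : Measure β} {ρ : Measure γ} [SFinite μ] [SFinite ν]
    [SFinite ρ] [NormedAddCommGroup E] [NormedSpace ℝ E] {F : α × β × γ → E}
    (hF : Integrable F (μ.prod (ν.prod ρ))) :
    ∫ x, ∫ y, ∫ z, F (x, y, z) ∂ρ ∂ν ∂μ = ∫ z, ∫ y, ∫ x, F (x, y, z) ∂μ ∂ν ∂ρ := by
  have hG : Integrable (fun q : β × γ => ∫ x, F (x, q) ∂μ) (ν.prod ρ) :=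
    hF.integral_prod_right
  calc ∫ x, ∫ y, ∫ z, F (x, y, z) ∂ρ ∂ν ∂μ
      = ∫ x, ∫ q, F (x, q) ∂(ν.prod ρ) ∂μ := by
        refine integral_congr_ae ?_
        filter_upwards [hF.prod_right_ae] with x hx
        exact integral_integral hx
    _ = ∫ q, ∫ x, F (x, q) ∂μ ∂(ν.prod ρ) := integral_integral_swap hF
    _ = ∫ y, ∫ z, ∫ x, F (x, y, z) ∂μ ∂ρ ∂ν :=
        (integral_integral (f := fun y z => ∫ x, F (x, y, z) ∂μ) hG).symm
    _ = ∫ z, ∫ y, ∫ x, F (x, y, z) ∂μ ∂ν ∂ρ :=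
        integral_integral_swap (f := fun y z => ∫ x, F (x, y, z) ∂μ) hG

lemma fker_add (x y : ℝ) : fker (x + y) = fker x * fker y := by
  rw [fker, fker, fker, ← Complex.exp_add]
  push_cast
  ring_nf

lemma conj_fker (x : ℝ) : starRingEnd ℂ (fker x) = fker (-x) := by
  rw [fker, fker, ← Complex.exp_conj]
  congr 1
  push_cast
  simp only [map_mul, Complex.conj_I, Complex.conj_ofReal, map_neg, map_ofNat]
  ring

lemma norm_fker (x : ℝ) : ‖fker x‖ = 1 := by
  rw [fker, Complex.norm_exp]
  norm_num [Complex.mul_I_re]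

lemma continuous_fker : Continuous fker := by
  unfold fker
  fun_prop

lemma normSq_fker_mul (x : ℝ) (z : ℂ) : normSq (fker x * z) = normSq z := by
  rw [normSq_mul, normSq_eq_norm_sq (fker x), norm_fker, one_pow, one_mul]

lemma MeasureTheory.Integrable.fker_mul {α : Type*} [MeasurableSpace α] {μ : Measure α}
    {g : α → ℂ} (hg : Integrable g μ) {φ : α → ℝ} (hφ : Measurable φ) :
    Integrable (fun x => fker (φ x) * g x) μ :=
  hg.bdd_mul (c := 1) (continuous_fker.measurable.comp hφ).aestronglyMeasurable
    (Filter.Eventually.of_forall fun x => (norm_fker (φ x)).le)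

lemma integral_comp_sub_mul_fker (g : ℝ → ℂ) (f u : ℝ) :
    ∫ s, g (s - u) * fker (f * s) = fker (f * u) * ∫ s, g s * fker (f * s) := by
  rw [← integral_add_right_eq_self _ u, ← integral_const_mul]
  congr 1 with s
  rw [add_sub_cancel_right, mul_add, fker_add]
  ring

lemma integral_conj_mul_fker_neg (g : ℝ → ℂ) (f : ℝ) :
    ∫ t, starRingEnd ℂ (g t) * fker (-f * t) = starRingEnd ℂ (∫ t, g t * fker (f * t)) := by
  rw [← integral_conj]
  congr 1 with t
  rw [map_mul, conj_fker, neg_mul]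

theorem stmt_0_general (ψ : ℝ → ℂ) (h : ℝ → ℝ)
    (hh1 : ∫ u, h u = 1)
    (hint : Integrable (fun p : ℝ × ℝ × ℝ =>
      (h p.2.2 : ℂ) * ψ (p.1 - p.2.2) * starRingEnd ℂ (ψ (p.2.1 - p.2.2))))
    (K : ℝ → ℝ → ℂ)
    (hK : ∀ s t, K s t = ∫ u, (h u : ℂ) * ψ (s - u) * starRingEnd ℂ (ψ (t - u)))
    (𝒦 : ℝ → ℝ → ℂ)
    (h𝒦 : ∀ f f', 𝒦 f f' = ∫ s, ∫ t, K s t * fker (f * s) * fker (f' * t))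
    (Ψ : ℝ → ℂ)
    (hΨ : ∀ f, Ψ f = ∫ t, ψ t * fker (f * t))
    (f : ℝ) :
    𝒦 f (-f) = Complex.normSq (Ψ f) := by
  set F : ℝ × ℝ × ℝ → ℂ := fun p => (h p.2.2 : ℂ) * (ψ (p.1 - p.2.2) * fker (f * p.1)) *
    (starRingEnd ℂ (ψ (p.2.1 - p.2.2)) * fker (-f * p.2.1)) with hF_def
  have hF : Integrable F := by
    convert (hint.fker_mul (φ := fun p => -f * p.2.1) (by fun_prop)).fker_mul
      (φ := fun p => f * p.1) (by fun_prop) using 2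
    ring
  have h_inner (u : ℝ) : ∫ t, ∫ s, F (s, t, u) = h u * normSq (Ψ f) := by
    simp only [hF_def, integral_mul_const, integral_const_mul,
      integral_conj_mul_fker_neg (fun t => ψ (t - u)), integral_comp_sub_mul_fker, ← hΨ]
    rw [mul_assoc, mul_conj, normSq_fker_mul]
  calc 𝒦 f (-f) = ∫ s, ∫ t, ∫ u, F (s, t, u) := by
        simp only [h𝒦, hK, ← integral_mul_const]
        congr 1 with s; congr 1 with t; congr 1 with u
        simp only [hF_def]
        ring
    _ = ∫ u, ∫ t, ∫ s, F (s, t, u) := integral_integral_integral_swap hF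
    _ = ∫ u, (h u : ℂ) * normSq (Ψ f) := by simp only [h_inner]
    _ = normSq (Ψ f) := by
        rw [integral_mul_const, integral_complex_ofReal, hh1, ofReal_one, one_mul]

theorem stmt_0 (ψ : ℝ → ℂ) (h : ℝ → ℝ)
    (hψ : Integrable ψ) (hh : Integrable h) (hh1 : ∫ u, h u = 1)
    (hint : Integrable (fun p : ℝ × ℝ × ℝ =>
      (h p.2.2 : ℂ) * ψ (p.1 - p.2.2) * starRingEnd ℂ (ψ (p.2.1 - p.2.2))))
    (K : ℝ → ℝ → ℂ)
    (hK : ∀ s t, K s t = ∫ u, (h u : ℂ) * ψ (s - u) * starRingEnd ℂ (ψ (t - u)))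
    (𝒦 : ℝ → ℝ → ℂ)
    (h𝒦 : ∀ f f', 𝒦 f f' = ∫ s, ∫ t, K s t * fker (f * s) * fker (f' * t))
    (Ψ : ℝ → ℂ)
    (hΨ : ∀ f, Ψ f = ∫ t, ψ t * fker (f * t))
    (f : ℝ) :
    𝒦 f (-f) = Complex.normSq (Ψ f) :=
  stmt_0_general ψ h hh1 hint K hK 𝒦 h𝒦 Ψ hΨ f
end

section
/- (Key step of Proposition 1.) Let (φ_l)_{l∈ℕ} be integrable functions ℝ → ℂ and (η_l)_{l∈ℕ} nonnegative reals with ∑_l η_l (∫_ℝ |φ_l(s)| ds)² < ∞, and suppose K(s,t) = ∑_{l=0}^∞ η_l φ_l(s) conj(φ_l(t)) pointwise with K integrable on ℝ². Then ∫_ℝ ∫_ℝ K(s,t) ds dt = ∑_{l=0}^∞ η_l |∫_ℝ φ_l(t) dt|². Consequently, if ∫_ℝ ∫_ℝ K(s,t) ds dt = 0, then every l with η_l > 0 satisfies ∫_ℝ φ_l(t) dt = 0. -/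
open MeasureTheory Complex

theorem stmt_4 (φ : ℕ → ℝ → ℂ) (η : ℕ → ℝ)
    (hφ : ∀ l, Integrable (φ l)) (hη : ∀ l, 0 ≤ η l)
    (hsum : Summable (fun l => η l * (∫ s, ‖φ l s‖) ^ 2))
    (K : ℝ → ℝ → ℂ)
    (hK : ∀ s t, K s t = ∑' l, (η l : ℂ) * φ l s * starRingEnd ℂ (φ l t))
    (hKint : Integrable (fun p : ℝ × ℝ => K p.1 p.2)) :
    (∫ s, ∫ t, K s t) = ∑' l, (η l : ℂ) * Complex.normSq (∫ t, φ l t) ∧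
    ((∫ s, ∫ t, K s t) = 0 → ∀ l, 0 < η l → (∫ t, φ l t) = 0) := by
  set f : ℕ → ℝ × ℝ → ℂ := fun l p => (η l : ℂ) * φ l p.1 * starRingEnd ℂ (φ l p.2) with hf
  have hconj : ∀ l, Integrable (fun t => starRingEnd ℂ (φ l t)) := fun l =>
    (hφ l).mono (RCLike.continuous_conj.comp_aestronglyMeasurable (hφ l).aestronglyMeasurable)
      (Filter.Eventually.of_forall fun t => by simp)
  have hint : ∀ l, Integrable (f l) (volume.prod volume) := by
    intro l
    have h1 : Integrable (fun s => (η l : ℂ) * φ l s) := (hφ l).const_mul _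
    simpa [f, mul_assoc] using h1.mul_prod (hconj l)
  have hnormint : ∀ l, (∫ p, ‖f l p‖ ∂(volume.prod volume)) = η l * (∫ s, ‖φ l s‖) ^ 2 := by
    intro l
    have h1 : (fun p : ℝ × ℝ => ‖f l p‖)
        = fun p => (fun s => η l * ‖φ l s‖) p.1 * (fun t => ‖φ l t‖) p.2 := by
      funext p
      simp only [f, norm_mul, Complex.norm_real, RCLike.norm_conj, Real.norm_eq_abs]
      rw [_root_.abs_of_nonneg (hη l)]
    have h2 := MeasureTheory.integral_prod_mul (μ := (volume : Measure ℝ))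
      (ν := (volume : Measure ℝ)) (fun s => η l * ‖φ l s‖) (fun t => ‖φ l t‖)
    rw [h1, h2, integral_const_mul]
    ring
  have hsum' : Summable (fun l => ∫ p, ‖f l p‖ ∂(volume.prod volume)) := by
    simpa only [hnormint] using hsum
  have key : (∫ p, K p.1 p.2 ∂((volume : Measure ℝ).prod volume))
      = ∑' l, ∫ p, f l p ∂((volume : Measure ℝ).prod volume) := by
    rw [show (fun p : ℝ × ℝ => K p.1 p.2) = fun p => ∑' l, f l p from funext fun p => hK p.1 p.2]
    exact (integral_tsum_of_summable_integral_norm hint hsum').symm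
  have hfl : ∀ l, (∫ p, f l p ∂((volume : Measure ℝ).prod volume))
      = (η l : ℂ) * Complex.normSq (∫ t, φ l t) := by
    intro l
    have h1 : (fun p : ℝ × ℝ => f l p)
        = fun p => (fun s => (η l : ℂ) * φ l s) p.1 * (fun t => starRingEnd ℂ (φ l t)) p.2 := by
      funext p; simp [f, mul_assoc]
    have h2 := MeasureTheory.integral_prod_mul (μ := (volume : Measure ℝ))
      (ν := (volume : Measure ℝ)) (fun s => (η l : ℂ) * φ l s) (fun t => starRingEnd ℂ (φ l t))
    rw [h1, h2, integral_const_mul, integral_conj, mul_assoc, Complex.mul_conj]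
  have hii : (∫ s, ∫ t, K s t) = ∫ p, K p.1 p.2 ∂((volume : Measure ℝ).prod volume) := by
    rw [← MeasureTheory.integral_integral
      (by rwa [← Measure.volume_eq_prod] :
        Integrable (fun p : ℝ × ℝ => K p.1 p.2) (volume.prod volume))]
  have main : (∫ s, ∫ t, K s t) = ∑' l, (η l : ℂ) * Complex.normSq (∫ t, φ l t) := by
    rw [hii, key]; exact tsum_congr hfl
  refine ⟨main, fun h0 l hl => ?_⟩
  have hle : ∀ j, η j * Complex.normSq (∫ t, φ j t) ≤ η j * (∫ s, ‖φ j s‖) ^ 2 := by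
    intro j
    apply mul_le_mul_of_nonneg_left _ (hη j)
    rw [Complex.normSq_eq_norm_sq]
    exact pow_le_pow_left₀ (norm_nonneg _) (norm_integral_le_integral_norm _) 2
  have hnn : ∀ j, 0 ≤ η j * Complex.normSq (∫ t, φ j t) := fun j =>
    mul_nonneg (hη j) (Complex.normSq_nonneg _)
  have hsumR : Summable (fun j => η j * Complex.normSq (∫ t, φ j t)) :=
    Summable.of_nonneg_of_le hnn hle hsum
  have hcast : (∑' j, ((η j * Complex.normSq (∫ t, φ j t) : ℝ) : ℂ)) = 0 := by
    rw [← h0, main]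
    push_cast
    rfl
  rw [← Complex.ofReal_tsum] at hcast
  have hR : (∑' j, η j * Complex.normSq (∫ t, φ j t)) = 0 := by exact_mod_cast hcast
  have hzero : η l * Complex.normSq (∫ t, φ l t) = 0 := by
    have h := Summable.le_tsum hsumR l (fun i _ => hnn i)
    rw [hR] at h
    linarith [hnn l]
  rcases mul_eq_zero.mp hzero with h | h
  · exact absurd h (ne_of_gt hl)
  · exact Complex.normSq_eq_zero.mp h
end

section
/- (Lemma 2, deterministic form.) Let ψ₁, ψ₂: ℝ → ℂ be integrable functions such that |ψ₂(t)| ≤ A for all t, ∫_ℝ ψ₁(t) conj(ψ₂(t)) dt = 0, and ∫_ℝ |ψ₁(t+u) − ψ₁(t)| dt ≤ C|u| for all u ∈ ℝ, where A, C ≥ 0. Let r: ℝ → ℂ be measurable with ∫_ℝ |u| |r(u)| du < ∞, and suppose (t,u) ↦ ψ₁(t+u) conj(ψ₂(t)) r(u) is integrable on ℝ². For T > 0, define ψ_i^{(T)}(t) = T^{−1/2} ψ_i(t/T). Then |∫_ℝ ∫_ℝ ψ₁^{(T)}(t+u) conj(ψ₂^{(T)}(t)) r(u) du dt| ≤ T^{−1}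 A C ∫_ℝ |u| |r(u)| du. -/
open MeasureTheory Complex

/-- The `T`-normalized rescaling `ψ^{(T)}(t) = T^{-1/2} ψ(t/T)`. -/
noncomputable def resc (T : ℝ) (ψ : ℝ → ℂ) : ℝ → ℂ :=
  fun t => (((Real.sqrt T)⁻¹ : ℝ) : ℂ) * ψ (t / T)

private lemma shear_qmp {s : ℝ} (hs : s ≠ 0) :
    Measure.QuasiMeasurePreserving (fun p : ℝ × ℝ => p.1 + s * p.2)
      ((volume : Measure ℝ).prod volume) (volume : Measure ℝ) := by
  have h1 : MeasurePreserving (fun p : ℝ × ℝ => (p.1 + p.2, p.2))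
      ((volume : Measure ℝ).prod volume) ((volume : Measure ℝ).prod volume) :=
    measurePreserving_add_prod _ _
  have hfst : Measure.QuasiMeasurePreserving (Prod.fst : ℝ × ℝ → ℝ)
      ((volume : Measure ℝ).prod volume) (volume : Measure ℝ) :=
    Measure.quasiMeasurePreserving_fst
  have hscale : Measure.QuasiMeasurePreserving (fun p : ℝ × ℝ => (p.1, s * p.2))
      ((volume : Measure ℝ).prod volume) ((volume : Measure ℝ).prod volume) := by
    refine ⟨measurable_fst.prodMk (measurable_const.mul measurable_snd), ?_⟩
    have hg : Measurable (fun x : ℝ => s * x) := measurable_id.const_mul s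
    have : (fun p : ℝ × ℝ => (p.1, s * p.2)) = Prod.map id (fun x => s * x) := rfl
    rw [this, ← Measure.map_prod_map _ _ measurable_id hg,
      Measure.map_id, Real.map_volume_mul_left hs]
    exact (Measure.AbsolutelyContinuous.refl _).prod Measure.smul_absolutelyContinuous
  exact (hfst.comp h1.quasiMeasurePreserving).comp hscale

theorem stmt_5 (ψ₁ ψ₂ : ℝ → ℂ) (r : ℝ → ℂ) (A C T : ℝ)
    (hA : 0 ≤ A) (hC : 0 ≤ C) (hT : 0 < T)
    (h1 : Integrable ψ₁) (h2 : Integrable ψ₂)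
    (hbound : ∀ t, ‖ψ₂ t‖ ≤ A)
    (horth : ∫ t, ψ₁ t * starRingEnd ℂ (ψ₂ t) = 0)
    (hvar : ∀ u : ℝ, ∫ t, ‖ψ₁ (t + u) - ψ₁ t‖ ≤ C * |u|)
    (hr : Measurable r) (hrint : Integrable (fun u => |u| * ‖r u‖))
    (hint2 : Integrable (fun p : ℝ × ℝ =>
      ψ₁ (p.1 + p.2) * starRingEnd ℂ (ψ₂ p.1) * r p.2)) :
    ‖∫ t, ∫ u, resc T ψ₁ (t + u) * starRingEnd ℂ (resc T ψ₂ t) * r u‖ ≤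
      T⁻¹ * A * C * ∫ u, |u| * ‖r u‖ := by
  set s : ℝ := T⁻¹ with hs_def
  have hs0 : 0 < s := inv_pos.2 hT
  have hs : s ≠ 0 := hs0.ne'
  -- translated ψ₁ is integrable
  have hψ₁a : ∀ a : ℝ, Integrable (fun t => ψ₁ (t + a)) := fun a =>
    ((measurePreserving_add_right volume a).integrable_comp h1.aestronglyMeasurable).2 h1
  have hψ₂m : AEStronglyMeasurable (fun t => starRingEnd ℂ (ψ₂ t)) volume :=
    Complex.continuous_conj.comp_aestronglyMeasurable h2.aestronglyMeasurable
  -- products with conj ψ₂ are integrable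
  have hmul : ∀ a : ℝ, Integrable (fun t => ψ₁ (t + a) * starRingEnd ℂ (ψ₂ t)) := by
    intro a
    have hb : Integrable (fun t => starRingEnd ℂ (ψ₂ t) * ψ₁ (t + a)) :=
      (hψ₁a a).bdd_mul hψ₂m (Filter.Eventually.of_forall fun t => by simpa using hbound t)
    exact hb.congr (Filter.Eventually.of_forall fun t => mul_comm _ _)
  have hmul0 : Integrable (fun t => ψ₁ t * starRingEnd ℂ (ψ₂ t)) := by
    have hb : Integrable (fun t => starRingEnd ℂ (ψ₂ t) * ψ₁ t) :=
      h1.bdd_mul hψ₂m (Filter.Eventually.of_forall fun t => by simpa using hbound t)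
    exact hb.congr (Filter.Eventually.of_forall fun t => mul_comm _ _)
  have hdiff : ∀ a : ℝ, Integrable (fun t => ψ₁ (t + a) - ψ₁ t) := fun a => (hψ₁a a).sub h1
  -- shifted variation bound
  have hshift : ∀ a b : ℝ, ∫ t, ‖ψ₁ (t + a) - ψ₁ (t + b)‖ ≤ C * |a - b| := by
    intro a b
    have he : (fun t => ‖ψ₁ (t + a) - ψ₁ (t + b)‖)
        = fun t => (fun τ => ‖ψ₁ (τ + (a - b)) - ψ₁ τ‖) (t + b) := by
      funext t
      simp only
      have : t + b + (a - b) = t + a := by ring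
      rw [this]
    rw [he, integral_add_right_eq_self (fun τ => ‖ψ₁ (τ + (a - b)) - ψ₁ τ‖) b]
    exact hvar (a - b)
  -- key inner estimate
  have hkey : ∀ a : ℝ, ‖∫ t, ψ₁ (t + a) * starRingEnd ℂ (ψ₂ t)‖ ≤ A * (C * |a|) := by
    intro a
    have hrw : ∫ t, ψ₁ (t + a) * starRingEnd ℂ (ψ₂ t)
        = ∫ t, (ψ₁ (t + a) - ψ₁ t) * starRingEnd ℂ (ψ₂ t) := by
      have h := integral_sub (hmul a) hmul0
      rw [horth, sub_zero] at h
      rw [← h]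
      congr 1
      funext t
      ring
    rw [hrw]
    have hgint : Integrable (fun t => A * ‖ψ₁ (t + a) - ψ₁ t‖) := ((hdiff a).norm.const_mul A)
    have hb : ∀ᵐ t : ℝ, ‖(ψ₁ (t + a) - ψ₁ t) * starRingEnd ℂ (ψ₂ t)‖
        ≤ A * ‖ψ₁ (t + a) - ψ₁ t‖ := by
      refine Filter.Eventually.of_forall fun t => ?_
      rw [norm_mul, mul_comm]
      have : ‖starRingEnd ℂ (ψ₂ t)‖ ≤ A := by simpa using hbound t
      exact mul_le_mul_of_nonneg_right this (norm_nonneg _)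
    refine (norm_integral_le_of_norm_le hgint hb).trans ?_
    rw [integral_const_mul]
    exact mul_le_mul_of_nonneg_left (hvar a) hA
  -- measurability of the sheared 2D functions
  have Fmeas : ∀ σ : ℝ, σ ≠ 0 → AEStronglyMeasurable
      (fun p : ℝ × ℝ => ψ₁ (p.1 + σ * p.2) * starRingEnd ℂ (ψ₂ p.1) * r p.2)
      ((volume : Measure ℝ).prod volume) := by
    intro σ hσ
    have m1 : AEStronglyMeasurable (fun p : ℝ × ℝ => ψ₁ (p.1 + σ * p.2))
        ((volume : Measure ℝ).prod volume) :=
      h1.aestronglyMeasurable.comp_quasiMeasurePreserving (shear_qmp hσ)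
    have m2 : AEStronglyMeasurable (fun p : ℝ × ℝ => starRingEnd ℂ (ψ₂ p.1))
        ((volume : Measure ℝ).prod volume) :=
      hψ₂m.comp_quasiMeasurePreserving Measure.quasiMeasurePreserving_fst
    have m3 : AEStronglyMeasurable (fun p : ℝ × ℝ => r p.2)
        ((volume : Measure ℝ).prod volume) :=
      (hr.comp measurable_snd).aestronglyMeasurable
    exact (m1.mul m2).mul m3
  -- the difference function D is integrable on the product
  have hmeasD : AEStronglyMeasurable
      (fun p : ℝ × ℝ => (ψ₁ (p.1 + s * p.2) - ψ₁ (p.1 + p.2)) * starRingEnd ℂ (ψ₂ p.1) * r p.2)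
      ((volume : Measure ℝ).prod volume) := by
    have := (Fmeas s hs).sub (Fmeas 1 one_ne_zero)
    refine this.congr (Filter.Eventually.of_forall fun p => ?_)
    simp only [Pi.sub_apply]
    ring
  have hDint_t : ∀ u : ℝ, Integrable
      (fun t => (ψ₁ (t + s * u) - ψ₁ (t + u)) * starRingEnd ℂ (ψ₂ t) * r u) := by
    intro u
    have := ((hmul (s * u)).sub (hmul u)).mul_const (r u)
    refine this.congr (Filter.Eventually.of_forall fun t => ?_)
    simp only [Pi.sub_apply]
    ring
  have hDnorm : ∀ u : ℝ, ∫ t, ‖(ψ₁ (t + s * u) - ψ₁ (t + u)) * starRingEnd ℂ (ψ₂ t) * r u‖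
      ≤ (A * C * |s - 1|) * (|u| * ‖r u‖) := by
    intro u
    have hintd : Integrable (fun t => ψ₁ (t + s * u) - ψ₁ (t + u)) := (hψ₁a (s * u)).sub (hψ₁a u)
    have step1 : ∫ t, ‖(ψ₁ (t + s * u) - ψ₁ (t + u)) * starRingEnd ℂ (ψ₂ t) * r u‖
        ≤ ∫ t, (A * ‖r u‖) * ‖ψ₁ (t + s * u) - ψ₁ (t + u)‖ := by
      refine integral_mono (hDint_t u).norm (hintd.norm.const_mul _) fun t => ?_
      simp only [norm_mul]
      have h2t : ‖starRingEnd ℂ (ψ₂ t)‖ ≤ A := by simpa using hbound t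
      calc ‖ψ₁ (t + s * u) - ψ₁ (t + u)‖ * ‖starRingEnd ℂ (ψ₂ t)‖ * ‖r u‖
          ≤ ‖ψ₁ (t + s * u) - ψ₁ (t + u)‖ * A * ‖r u‖ := by
            exact mul_le_mul_of_nonneg_right
              (mul_le_mul_of_nonneg_left h2t (norm_nonneg _)) (norm_nonneg _)
        _ = (A * ‖r u‖) * ‖ψ₁ (t + s * u) - ψ₁ (t + u)‖ := by ring
    refine step1.trans ?_
    rw [integral_const_mul]
    have := hshift (s * u) u
    have h2 : (A * ‖r u‖) * (∫ t, ‖ψ₁ (t + s * u) - ψ₁ (t + u)‖)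
        ≤ (A * ‖r u‖) * (C * |s * u - u|) :=
      mul_le_mul_of_nonneg_left this (by positivity)
    refine h2.trans (le_of_eq ?_)
    have : s * u - u = (s - 1) * u := by ring
    rw [this, abs_mul]
    ring
  have hD : Integrable
      (fun p : ℝ × ℝ => (ψ₁ (p.1 + s * p.2) - ψ₁ (p.1 + p.2)) * starRingEnd ℂ (ψ₂ p.1) * r p.2)
      ((volume : Measure ℝ).prod volume) := by
    refine (integrable_prod_iff' hmeasD).2 ⟨Filter.Eventually.of_forall hDint_t, ?_⟩
    have hmeas2 : AEStronglyMeasurable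
        (fun u : ℝ => ∫ t, ‖(ψ₁ (t + s * u) - ψ₁ (t + u)) * starRingEnd ℂ (ψ₂ t) * r u‖)
        volume := by
      have := (hmeasD.norm.prod_swap).integral_prod_right'
      exact this
    refine Integrable.mono' (hrint.const_mul (A * C * |s - 1|)) hmeas2 ?_
    refine Filter.Eventually.of_forall fun u => ?_
    rw [Real.norm_eq_abs, _root_.abs_of_nonneg (integral_nonneg fun t => norm_nonneg _)]
    exact hDnorm u
  -- the sheared function is integrable on the product
  have hFs : Integrable
      (fun p : ℝ × ℝ => ψ₁ (p.1 + s * p.2) * starRingEnd ℂ (ψ₂ p.1) * r p.2)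
      ((volume : Measure ℝ).prod volume) := by
    have h12 : Integrable (fun p : ℝ × ℝ =>
        ψ₁ (p.1 + p.2) * starRingEnd ℂ (ψ₂ p.1) * r p.2)
        ((volume : Measure ℝ).prod volume) := hint2
    refine (h12.add hD).congr (Filter.Eventually.of_forall fun p => ?_)
    simp only [Pi.add_apply]
    ring
  -- rewrite the LHS
  have hresc : ∀ t u : ℝ, resc T ψ₁ (t + u) * starRingEnd ℂ (resc T ψ₂ t) * r u
      = ((T⁻¹ : ℝ) : ℂ) * (ψ₁ ((t + u) / T) * starRingEnd ℂ (ψ₂ (t / T)) * r u) := by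
    intro t u
    have hTc : (((Real.sqrt T)⁻¹ : ℝ) : ℂ) * (((Real.sqrt T)⁻¹ : ℝ) : ℂ) = ((T⁻¹ : ℝ) : ℂ) := by
      rw [← Complex.ofReal_mul, ← mul_inv, Real.mul_self_sqrt hT.le]
    simp only [resc, map_mul, Complex.conj_ofReal]
    calc (((Real.sqrt T)⁻¹ : ℝ) : ℂ) * ψ₁ ((t + u) / T)
          * ((((Real.sqrt T)⁻¹ : ℝ) : ℂ) * starRingEnd ℂ (ψ₂ (t / T))) * r u
        = ((((Real.sqrt T)⁻¹ : ℝ) : ℂ) * (((Real.sqrt T)⁻¹ : ℝ) : ℂ))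
          * (ψ₁ ((t + u) / T) * starRingEnd ℂ (ψ₂ (t / T)) * r u) := by ring
      _ = ((T⁻¹ : ℝ) : ℂ) * (ψ₁ ((t + u) / T) * starRingEnd ℂ (ψ₂ (t / T)) * r u) := by
          rw [hTc]
  have e1 : ∫ t, ∫ u, resc T ψ₁ (t + u) * starRingEnd ℂ (resc T ψ₂ t) * r u
      = ((T⁻¹ : ℝ) : ℂ) * ∫ t, ∫ u, ψ₁ ((t + u) / T) * starRingEnd ℂ (ψ₂ (t / T)) * r u := by
    simp_rw [hresc, integral_const_mul]
  have e2 : ∫ t, ∫ u, ψ₁ ((t + u) / T) * starRingEnd ℂ (ψ₂ (t / T)) * r u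
      = |T| • ∫ t, ∫ u, ψ₁ (t + s * u) * starRingEnd ℂ (ψ₂ t) * r u := by
    rw [← MeasureTheory.Measure.integral_comp_div
      (fun τ => ∫ u, ψ₁ (τ + s * u) * starRingEnd ℂ (ψ₂ τ) * r u) T]
    refine integral_congr_ae (Filter.Eventually.of_forall fun t => ?_)
    simp only
    congr 1
    funext u
    have : t / T + s * u = (t + u) / T := by
      rw [hs_def]
      field_simp
    rw [this]
  have e3 : ∫ t, ∫ u, ψ₁ (t + s * u) * starRingEnd ℂ (ψ₂ t) * r u
      = ∫ u, ∫ t, ψ₁ (t + s * u) * starRingEnd ℂ (ψ₂ t) * r u := by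
    exact integral_integral_swap hFs
  -- final bound
  have hZ : ‖∫ u, ∫ t, ψ₁ (t + s * u) * starRingEnd ℂ (ψ₂ t) * r u‖
      ≤ (s * A * C) * ∫ u, |u| * ‖r u‖ := by
    have hb : ∀ᵐ u : ℝ, ‖∫ t, ψ₁ (t + s * u) * starRingEnd ℂ (ψ₂ t) * r u‖
        ≤ (s * A * C) * (|u| * ‖r u‖) := by
      refine Filter.Eventually.of_forall fun u => ?_
      rw [show (fun t => ψ₁ (t + s * u) * starRingEnd ℂ (ψ₂ t) * r u)
          = fun t => (ψ₁ (t + s * u) * starRingEnd ℂ (ψ₂ t)) * r u from rfl,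
        integral_mul_const, norm_mul]
      have h1' := hkey (s * u)
      have : ‖∫ t, ψ₁ (t + s * u) * starRingEnd ℂ (ψ₂ t)‖ * ‖r u‖
          ≤ (A * (C * |s * u|)) * ‖r u‖ :=
        mul_le_mul_of_nonneg_right h1' (norm_nonneg _)
      refine this.trans (le_of_eq ?_)
      rw [abs_mul, abs_of_pos hs0]
      ring
    have := norm_integral_le_of_norm_le (hrint.const_mul (s * A * C)) hb
    refine this.trans (le_of_eq ?_)
    rw [integral_const_mul]
  rw [e1, e2, e3]
  rw [norm_mul, norm_smul]
  simp only [Complex.norm_real, Real.norm_eq_abs, abs_of_pos (inv_pos.2 hT), abs_of_pos hT]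
  calc T⁻¹ * (T * ‖∫ u, ∫ t, ψ₁ (t + s * u) * starRingEnd ℂ (ψ₂ t) * r u‖)
      ≤ T⁻¹ * (T * ((s * A * C) * ∫ u, |u| * ‖r u‖)) := by
        have := mul_le_mul_of_nonneg_left hZ hT.le
        exact mul_le_mul_of_nonneg_left this (inv_pos.2 hT).le
    _ = T⁻¹ * A * C * ∫ u, |u| * ‖r u‖ := by
        rw [hs_def]
        field_simp
end

section
/- (Key step of Lemma 3.) Let ψ: ℝ → ℂ be integrable and square-integrable with ∫_ℝ ψ(s) ψ(s−x) ds = 0 for every x ∈ ℝ, and let h: ℝ → ℝ be integrable. Define K(s,t) = ∫_ℝ h(u) ψ(s−u) conj(ψ(t−u)) du, and assume (s,t) ↦ K(s,t)² is integrable on ℝ². Then ∫_ℝ ∫_ℝ K(s,t) K(s,t) ds dt = 0. -/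
open MeasureTheory Complex

/-- Key computation: for strongly measurable, square-integrable `φ` with vanishing
auto-correlations and integrable, strongly measurable `g`, the integral
`∫ t, (∫ u, g u * conj (φ (t-u))) * (∫ v, g v * conj (φ (t-v)))` vanishes. -/
lemma stmt_13_key (φ : ℝ → ℂ) (hφm : StronglyMeasurable φ)
    (hφ2 : Integrable (fun t => ‖φ t‖ ^ 2))
    (horth : ∀ u v : ℝ, ∫ t, φ (t - u) * φ (t - v) = 0)
    (g : ℝ → ℂ) (hgm : StronglyMeasurable g) (hg : Integrable g) :
    ∫ t, (∫ u, g u * star (φ (t - u))) * (∫ v, g v * star (φ (t - v))) = 0 := by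
  set c : ℝ → ℂ := fun x => star (φ x) with hc
  have hcm : StronglyMeasurable c := continuous_star.comp_stronglyMeasurable hφm
  -- integrability of products of shifts of c
  have hcc : ∀ u v : ℝ, Integrable (fun t => c (t - u) * c (t - v)) := by
    intro u v
    refine Integrable.mono'
      (((hφ2.comp_sub_right u).add (hφ2.comp_sub_right v)).div_const 2)
      (((hcm.comp_measurable ((measurable_id.sub measurable_const))).mul
        (hcm.comp_measurable ((measurable_id.sub measurable_const)))).aestronglyMeasurable)
      (Filter.Eventually.of_forall fun t => ?_)
    have h1 : ‖c (t - u) * c (t - v)‖ = ‖φ (t - u)‖ * ‖φ (t - v)‖ := by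
      rw [norm_mul, hc, norm_star, norm_star]
    rw [h1]
    simp only [Pi.add_apply]
    nlinarith [sq_nonneg (‖φ (t - u)‖ - ‖φ (t - v)‖), norm_nonneg (φ (t - u)),
      norm_nonneg (φ (t - v))]
  -- the inner auto-correlation integrals of c vanish
  have hczero : ∀ u v : ℝ, ∫ t, c (t - u) * c (t - v) = 0 := by
    intro u v
    have : (fun t => c (t - u) * c (t - v))
        = fun t => star (φ (t - u) * φ (t - v)) := by
      funext t; simp [hc, mul_comm]
    rw [this]
    have : ∫ t, star (φ (t - u) * φ (t - v))
        = star (∫ t, φ (t - u) * φ (t - v)) := integral_conj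
    rw [this, horth u v, star_zero]
  -- the big product integrand on  ℝ × (ℝ × ℝ)
  set F : ℝ → ℝ × ℝ → ℂ :=
    fun t p => (g p.1 * c (t - p.1)) * (g p.2 * c (t - p.2)) with hF
  have hFm : StronglyMeasurable (Function.uncurry F) := by
    apply StronglyMeasurable.mul
    · exact (hgm.comp_measurable measurable_snd.fst).mul
        (hcm.comp_measurable (measurable_fst.sub measurable_snd.fst))
    · exact (hgm.comp_measurable measurable_snd.snd).mul
        (hcm.comp_measurable (measurable_fst.sub measurable_snd.snd))
  -- integrability in t for each fixed p
  have hFt : ∀ p : ℝ × ℝ, Integrable (fun t => F t p) := by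
    intro p
    have := ((hcc p.1 p.2).const_mul (g p.1 * g p.2))
    exact this.congr (Filter.Eventually.of_forall fun t => by simp [hF]; ring)
  -- Cauchy-Schwarz-type bound for the t-integral of norms
  have hCS : ∀ u v : ℝ, (∫ t, ‖φ (t - u)‖ * ‖φ (t - v)‖) ≤ ∫ x, ‖φ x‖ ^ 2 := by
    intro u v
    have hi : Integrable (fun t => ‖φ (t - u)‖ * ‖φ (t - v)‖) := by
      refine (hcc u v).norm.congr (Filter.Eventually.of_forall fun t => ?_)
      simp only [hc, norm_mul, norm_star]
    have hj : Integrable (fun t => (‖φ (t - u)‖ ^ 2 + ‖φ (t - v)‖ ^ 2) / 2) :=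
      ((hφ2.comp_sub_right u).add (hφ2.comp_sub_right v)).div_const 2
    calc (∫ t, ‖φ (t - u)‖ * ‖φ (t - v)‖)
        ≤ ∫ t, (‖φ (t - u)‖ ^ 2 + ‖φ (t - v)‖ ^ 2) / 2 := by
          refine integral_mono hi hj fun t => ?_
          nlinarith [sq_nonneg (‖φ (t - u)‖ - ‖φ (t - v)‖)]
      _ = ∫ x, ‖φ x‖ ^ 2 := by
          rw [integral_div, integral_add (hφ2.comp_sub_right u) (hφ2.comp_sub_right v),
            integral_sub_right_eq_self (fun x => ‖φ x‖ ^ 2) u,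
            integral_sub_right_eq_self (fun x => ‖φ x‖ ^ 2) v]
          ring
  -- integrability of uncurry F on the product space
  have hFint : Integrable (Function.uncurry F)
      ((volume : Measure ℝ).prod ((volume : Measure ℝ).prod (volume : Measure ℝ))) := by
    rw [integrable_prod_iff' hFm.aestronglyMeasurable]
    constructor
    · exact Filter.Eventually.of_forall fun p => hFt p
    · refine Integrable.mono'
        ((hg.norm.mul_prod hg.norm).mul_const (∫ x, ‖φ x‖ ^ 2))
        (hFm.norm.integral_prod_left').aestronglyMeasurable
        (Filter.Eventually.of_forall fun p => ?_)
      have hnn : 0 ≤ ∫ t, ‖Function.uncurry F (t, p)‖ :=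
        integral_nonneg fun t => norm_nonneg _
      rw [Real.norm_of_nonneg hnn]
      have heq : (fun t => ‖Function.uncurry F (t, p)‖)
          = fun t => (‖g p.1‖ * ‖g p.2‖) * (‖φ (t - p.1)‖ * ‖φ (t - p.2)‖) := by
        funext t
        simp only [Function.uncurry, hF, norm_mul, hc, norm_star]
        ring
      rw [heq, integral_const_mul]
      have h1 : (∫ t, ‖φ (t - p.1)‖ * ‖φ (t - p.2)‖) ≤ ∫ x, ‖φ x‖ ^ 2 := hCS p.1 p.2
      have h2 : (0:ℝ) ≤ ‖g p.1‖ * ‖g p.2‖ := by positivity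
      calc ‖g p.1‖ * ‖g p.2‖ * ∫ t, ‖φ (t - p.1)‖ * ‖φ (t - p.2)‖
          ≤ ‖g p.1‖ * ‖g p.2‖ * ∫ x, ‖φ x‖ ^ 2 := by
            exact mul_le_mul_of_nonneg_left h1 h2
        _ = ‖g p.1‖ * ‖g p.2‖ * ∫ x, ‖φ x‖ ^ 2 := rfl
  -- now compute
  have step1 : ∀ t : ℝ, (∫ u, g u * c (t - u)) * (∫ v, g v * c (t - v))
      = ∫ p, F t p ∂((volume : Measure ℝ).prod (volume : Measure ℝ)) :=
    fun t => (integral_prod_mul (fun u => g u * c (t - u)) (fun v => g v * c (t - v))).symm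
  calc ∫ t, (∫ u, g u * star (φ (t - u))) * (∫ v, g v * star (φ (t - v)))
      = ∫ t, ∫ p, F t p ∂((volume : Measure ℝ).prod (volume : Measure ℝ)) := by
        exact integral_congr_ae (Filter.Eventually.of_forall fun t => step1 t)
    _ = ∫ p, (∫ t, F t p) ∂((volume : Measure ℝ).prod (volume : Measure ℝ)) :=
        integral_integral_swap hFint
    _ = 0 := by
        have : ∀ p : ℝ × ℝ, (∫ t, F t p) = 0 := by
          intro p
          have heq : (fun t => F t p)
              = fun t => (g p.1 * g p.2) * (c (t - p.1) * c (t - p.2)) := by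
            funext t; simp only [hF]; ring
          rw [heq, integral_const_mul, hczero p.1 p.2, mul_zero]
        simp [this]

theorem stmt_13 (ψ : ℝ → ℂ) (h : ℝ → ℝ)
    (hψ1 : Integrable ψ) (hψ2 : Integrable (fun t => ‖ψ t‖ ^ 2))
    (horth : ∀ x : ℝ, ∫ s, ψ s * ψ (s - x) = 0)
    (hh : Integrable h)
    (K : ℝ → ℝ → ℂ)
    (hK : ∀ s t, K s t = ∫ u, (h u : ℂ) * ψ (s - u) * starRingEnd ℂ (ψ (t - u)))
    (hKsq : Integrable (fun p : ℝ × ℝ => K p.1 p.2 * K p.1 p.2)) :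
    ∫ s, ∫ t, K s t * K s t = 0 := by
  -- strongly measurable representatives
  set φ : ℝ → ℂ := hψ1.aestronglyMeasurable.mk ψ with hφdef
  have hφm : StronglyMeasurable φ := hψ1.aestronglyMeasurable.stronglyMeasurable_mk
  have hφe : ψ =ᵐ[volume] φ := hψ1.aestronglyMeasurable.ae_eq_mk
  set h' : ℝ → ℝ := hh.aestronglyMeasurable.mk h with hh'def
  have hh'm : StronglyMeasurable h' := hh.aestronglyMeasurable.stronglyMeasurable_mk
  have hh'e : h =ᵐ[volume] h' := hh.aestronglyMeasurable.ae_eq_mk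
  -- transported hypotheses
  have hφ1 : Integrable φ := hψ1.congr hφe
  have hφ2 : Integrable (fun t => ‖φ t‖ ^ 2) :=
    hψ2.congr (hφe.mono fun t ht => by simp only [ht])
  have hh' : Integrable h' := hh.congr hh'e
  -- shifted a.e. equalities
  have hmp : ∀ s : ℝ, MeasurePreserving (fun u : ℝ => s - u) volume volume := by
    intro s
    have h1 := (measurePreserving_add_right (volume : Measure ℝ) s).comp
      (Measure.measurePreserving_neg (volume : Measure ℝ))
    have h2 : ((fun x : ℝ => x + s) ∘ Neg.neg) = fun u : ℝ => s - u := by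
      funext u; simp [Function.comp, sub_eq_neg_add]
    rwa [h2] at h1
  have hshiftL : ∀ s : ℝ, (fun u => ψ (s - u)) =ᵐ[volume] fun u => φ (s - u) := by
    intro s
    have := (hmp s).quasiMeasurePreserving.ae_eq_comp hφe
    simpa [Function.comp_def] using this
  have hshiftR : ∀ x : ℝ, (fun u => ψ (u - x)) =ᵐ[volume] fun u => φ (u - x) := by
    intro x
    have := (measurePreserving_sub_right (volume : Measure ℝ) x).quasiMeasurePreserving.ae_eq_comp
      hφe
    simpa [Function.comp_def] using this
  -- orthogonality for φ
  have hφorth0 : ∀ x : ℝ, ∫ s, φ s * φ (s - x) = 0 := by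
    intro x
    rw [← horth x]
    exact integral_congr_ae ((hφe.mul (hshiftR x)).symm)
  have hφorth : ∀ u v : ℝ, ∫ t, φ (t - u) * φ (t - v) = 0 := by
    intro u v
    have hfe : (fun t : ℝ => φ (t - u) * φ (t - v))
        = fun t : ℝ => (fun w => φ w * φ (w - (v - u))) (t - u) := by
      funext t
      have h2 : t - u - (v - u) = t - v := by ring
      simp only [h2]
    rw [hfe, integral_sub_right_eq_self (fun w => φ w * φ (w - (v - u))) u]
    exact hφorth0 (v - u)
  -- K in terms of the measurable representatives
  have hK' : ∀ s t : ℝ, K s t = ∫ u, ((h' u : ℂ) * φ (s - u)) * star (φ (t - u)) := by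
    intro s t
    rw [hK s t]
    refine integral_congr_ae ?_
    have e1 : (fun u => (h u : ℂ)) =ᵐ[volume] fun u => (h' u : ℂ) :=
      hh'e.mono fun u hu => by simp only [hu]
    have e2 := hshiftL s
    have e3 : (fun u => starRingEnd ℂ (ψ (t - u))) =ᵐ[volume]
        fun u => star (φ (t - u)) :=
      (hshiftL t).mono fun u hu => by simp only [starRingEnd_apply]; exact congrArg star hu
    exact (e1.mul e2).mul e3
  -- a.e. s, the convolution integrand is integrable
  have haeconv : ∀ᵐ s : ℝ, Integrable (fun u => (h' u : ℂ) * φ (s - u)) := by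
    have hcoe : Integrable (fun u => (h' u : ℂ)) := hh'.ofReal
    have := hcoe.ae_convolution_exists (L := ContinuousLinearMap.mul ℂ ℂ) hφ1
    filter_upwards [this] with s hs
    simpa [ConvolutionExistsAt] using hs
  -- conclude
  have hae : (fun s => ∫ t, K s t * K s t) =ᵐ[volume] 0 := by
    filter_upwards [haeconv] with s hs
    have hgm : StronglyMeasurable (fun u => (h' u : ℂ) * φ (s - u)) :=
      (Complex.continuous_ofReal.comp_stronglyMeasurable hh'm).mul
        (hφm.comp_measurable (measurable_const.sub measurable_id))
    have key := stmt_13_key φ hφm hφ2 hφorth (fun u => (h' u : ℂ) * φ (s - u)) hgm hs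
    have : (fun t => K s t * K s t)
        = fun t => (∫ u, ((h' u : ℂ) * φ (s - u)) * star (φ (t - u)))
          * (∫ v, ((h' v : ℂ) * φ (s - v)) * star (φ (t - v))) := by
      funext t; rw [hK' s t]
    simp only [Pi.zero_apply]
    rw [this, ← key]
  exact integral_eq_zero_of_ae hae
end

section
/- (Maximum likelihood step of Proposition 6.) Let p ≥ 1, let B and Σ be p×p Hermitian positive definite complex matrices, and let n > 0 be real. Then det(Σ)^{−n} exp(−Re tr(Σ^{−1} B)) ≤ n^{np} det(B)^{−n} e^{−np}, where det(Σ) and det(B) denote the (positive real) determinants, with equality if and only if Σ = n^{−1} B. Equivalently, over Hermitian positive definite Σ, the function Σ ↦ det(Σ)^{−n} exp(−Re tr(Σ^{−1} B)) is uniquely maximized at Σ = n^{−1} B. -/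
open Matrix
open scoped ComplexOrder

lemma aux_scalar {n t : ℝ} (hn : 0 < n) (ht : 0 < t) :
    n * Real.log t - t ≤ n * Real.log n - n ∧
    (n * Real.log t - t = n * Real.log n - n ↔ t = n) := by
  have hd : 0 < t / n := div_pos ht hn
  have h1 : Real.log (t / n) ≤ t / n - 1 := Real.log_le_sub_one_of_pos hd
  rw [Real.log_div ht.ne' hn.ne'] at h1
  constructor
  · have := mul_le_mul_of_nonneg_left h1 hn.le
    have h2 : n * (t / n - 1) = t - n := by field_simp
    nlinarith
  · constructor
    · intro h
      by_contra hne
      have hne1 : t / n ≠ 1 := by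
        intro h1'
        exact hne (by field_simp at h1'; linarith)
      have h3 : Real.log (t / n) < t / n - 1 := Real.log_lt_sub_one_of_pos hd hne1
      rw [Real.log_div ht.ne' hn.ne'] at h3
      have := mul_lt_mul_of_pos_left h3 hn
      have h2 : n * (t / n - 1) = t - n := by field_simp
      nlinarith
    · rintro rfl; rfl

lemma aux_posdef_conj {p : ℕ} {B C : Matrix (Fin p) (Fin p) ℂ} (hB : B.PosDef)
    (hC : C.IsHermitian) (hCu : IsUnit C) : (C * B * C).PosDef := by
  have hCe : C * B * C = Cᴴ * B * C := by rw [hC.eq]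
  refine Matrix.PosDef.of_dotProduct_mulVec_pos ?_ (fun x hx => ?_)
  · rw [hCe]; exact isHermitian_conjTranspose_mul_mul C hB.1
  · have hx' : C *ᵥ x ≠ 0 := by
      intro h
      exact hx ((Matrix.mulVec_injective_iff_isUnit.mpr hCu) (h.trans (Matrix.mulVec_zero C).symm))
    have h2 := hB.dotProduct_mulVec_pos hx'
    rw [hCe]
    simpa only [star_mulVec, dotProduct_mulVec, vecMul_vecMul] using h2

lemma aux_trace_eq {p : ℕ} {A : Matrix (Fin p) (Fin p) ℂ} (hA : A.IsHermitian) :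
    A.trace = ∑ i, (hA.eigenvalues i : ℂ) := by
  conv_lhs => rw [hA.spectral_theorem]
  rw [Unitary.conjStarAlgAut_apply, Matrix.trace_mul_comm, ← mul_assoc]
  rw [Matrix.mem_unitaryGroup_iff'.mp (hA.eigenvectorUnitary).2, one_mul, Matrix.trace_diagonal]
  rfl

theorem stmt_14 (p : ℕ) (hp : 1 ≤ p) (n : ℝ) (hn : 0 < n)
    (B Sg : Matrix (Fin p) (Fin p) ℂ)
    (hB : B.PosDef) (hSg : Sg.PosDef) :
    Sg.det.re ^ (-n) * Real.exp (-((Sg⁻¹ * B).trace.re)) ≤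
      n ^ (n * (p : ℝ)) * B.det.re ^ (-n) * Real.exp (-(n * (p : ℝ))) ∧
    (Sg.det.re ^ (-n) * Real.exp (-((Sg⁻¹ * B).trace.re)) =
      n ^ (n * (p : ℝ)) * B.det.re ^ (-n) * Real.exp (-(n * (p : ℝ))) ↔
      Sg = n⁻¹ • B) := by
  classical
  have hdS := hSg.det_pos
  have hdB := hB.det_pos
  rw [Complex.lt_def] at hdS hdB
  set dS := Sg.det.re with hdSdef
  set dB := B.det.re with hdBdef
  have hdSre : 0 < dS := by simpa using hdS.1
  have hdBre : 0 < dB := by simpa using hdB.1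
  have hdSc : Sg.det = (dS : ℂ) := Complex.ext rfl (by simpa using hdS.2.symm)
  have hdBc : B.det = (dB : ℂ) := Complex.ext rfl (by simpa using hdB.2.symm)
  open scoped MatrixOrder in set Q := CFC.sqrt Sg with hQdef
  open scoped MatrixOrder in have hQ2 : Q * Q = Sg := CFC.sqrt_mul_sqrt_self Sg hSg.posSemidef.nonneg
  open scoped MatrixOrder in have hQH : Q.IsHermitian := (CFC.sqrt_nonneg Sg).posSemidef.1
  have hdQ : Q.det ≠ 0 := by
    intro h
    have h0 : Sg.det = 0 := by rw [← hQ2, Matrix.det_mul, h, mul_zero]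
    rw [hdSc] at h0
    exact hdSre.ne' (by exact_mod_cast h0)
  set R := Q⁻¹ with hRdef
  have hRH : R.IsHermitian := hQH.inv
  have hQR : Q * R = 1 := Matrix.mul_nonsing_inv Q hdQ.isUnit
  have hRQ : R * Q = 1 := Matrix.nonsing_inv_mul Q hdQ.isUnit
  have hRu : IsUnit R := ⟨⟨R, Q, hRQ, hQR⟩, rfl⟩
  set A := R * B * R with hAdef
  have hA : A.PosDef := aux_posdef_conj hB hRH hRu
  set μ := hA.1.eigenvalues with hμdef
  have hμpos : ∀ i, 0 < μ i := hA.eigenvalues_pos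
  have hQAQ : Q * A * Q = B := by
    have h1 : Q * (R * B * R) * Q = (Q * R) * B * (R * Q) := by simp only [mul_assoc]
    rw [hAdef, h1, hQR, hRQ, one_mul, mul_one]
  have hSinv : Sg⁻¹ = R * R := by rw [← hQ2, Matrix.mul_inv_rev]
  have htr : (Sg⁻¹ * B).trace = A.trace := by
    rw [hSinv, mul_assoc, Matrix.trace_mul_comm, hAdef, mul_assoc]
  have hdetSgA : (dS : ℂ) * A.det = (dB : ℂ) := by
    have h2 := congrArg Matrix.det hQAQ
    rw [Matrix.det_mul, Matrix.det_mul] at h2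
    rw [← hdSc, ← hdBc, ← hQ2, Matrix.det_mul, ← h2]
    ring
  have hprod : ∏ i, μ i = dB / dS := by
    have h6 : A.det = ((∏ i, μ i : ℝ) : ℂ) := by
      rw [hA.1.det_eq_prod_eigenvalues]; norm_cast
    have h1 : (dS : ℂ) * ((∏ i, μ i : ℝ) : ℂ) = (dB : ℂ) := by
      rw [← h6]; exact hdetSgA
    have h2 : dS * ∏ i, μ i = dB := by exact_mod_cast h1
    rw [eq_div_iff hdSre.ne', mul_comm]; exact h2
  have htrre : (Sg⁻¹ * B).trace.re = ∑ i, μ i := by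
    rw [htr, aux_trace_eq hA.1]
    rw [← Complex.ofReal_sum]
    exact Complex.ofReal_re _
  have hLHS : dS ^ (-n) * Real.exp (-((Sg⁻¹ * B).trace.re)) =
      Real.exp (-(n * Real.log dB) + ∑ i, (n * Real.log (μ i) - μ i)) := by
    rw [htrre, Real.rpow_def_of_pos hdSre, ← Real.exp_add]
    congr 1
    have hlogdS : Real.log dS = Real.log dB - ∑ i, Real.log (μ i) := by
      have hds : dS = dB / ∏ i, μ i := by
        rw [hprod]
        field_simp
      rw [hds, Real.log_div hdBre.ne' (Finset.prod_pos fun i _ => hμpos i).ne',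
        Real.log_prod fun i _ => (hμpos i).ne']
    rw [hlogdS, Finset.sum_sub_distrib, ← Finset.mul_sum]
    ring
  have hRHS : n ^ (n * (p : ℝ)) * dB ^ (-n) * Real.exp (-(n * (p : ℝ))) =
      Real.exp (-(n * Real.log dB) + ∑ _i : Fin p, (n * Real.log n - n)) := by
    rw [Real.rpow_def_of_pos hn, Real.rpow_def_of_pos hdBre, ← Real.exp_add, ← Real.exp_add]
    congr 1
    rw [Finset.sum_const, Finset.card_univ, Fintype.card_fin, nsmul_eq_mul]
    ring
  have hle : ∀ i ∈ Finset.univ, n * Real.log (μ i) - μ i ≤ n * Real.log n - n :=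
    fun i _ => (aux_scalar hn (hμpos i)).1
  constructor
  · rw [hLHS, hRHS]
    exact Real.exp_le_exp.mpr (add_le_add_right (Finset.sum_le_sum hle) _)
  · rw [hLHS, hRHS, Real.exp_eq_exp]
    constructor
    · intro h
      have hsum := add_left_cancel h
      have hall : ∀ i, μ i = n := by
        intro i
        exact (aux_scalar hn (hμpos i)).2.mp
          ((Finset.sum_eq_sum_iff_of_le hle).mp hsum i (Finset.mem_univ i))
      have hA1 : A = (n : ℂ) • 1 := by
        have hfun : (RCLike.ofReal ∘ μ : Fin p → ℂ) = fun _ => (n : ℂ) := by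
          funext i
          simp [hall i]
        conv_lhs => rw [hA.1.spectral_theorem]
        rw [Unitary.conjStarAlgAut_apply, hfun, ← Matrix.smul_one_eq_diagonal, Matrix.mul_smul, Matrix.smul_mul, mul_one,
          Matrix.mem_unitaryGroup_iff.mp (hA.1.eigenvectorUnitary).2]
      have hB' : B = (n : ℂ) • Sg := by
        rw [← hQAQ, hA1, Matrix.mul_smul, mul_one, Matrix.smul_mul, hQ2]
      ext i j
      rw [hB']
      simp only [Matrix.smul_apply, Complex.real_smul, Complex.ofReal_inv, smul_eq_mul]
      field_simp
    · intro h
      have hBn : B = (n : ℂ) • Sg := by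
        rw [h]
        ext i j
        simp only [Matrix.smul_apply, Complex.real_smul, Complex.ofReal_inv, smul_eq_mul]
        field_simp
      have hA1 : A = (n : ℂ) • 1 := by
        rw [hAdef, hBn, Matrix.mul_smul, Matrix.smul_mul]
        congr 1
        rw [← hQ2]
        calc R * (Q * Q) * R = (R * Q) * (Q * R) := by simp only [mul_assoc]
        _ = 1 := by rw [hRQ, hQR, one_mul]
      have hsum : ∑ i, μ i = n * (p : ℝ) := by
        have h5 : ((∑ i, μ i : ℝ) : ℂ) = (n : ℂ) * (p : ℕ) := by
          rw [Complex.ofReal_sum, hμdef, ← aux_trace_eq hA.1]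
          calc A.trace = ((n : ℂ) • (1 : Matrix (Fin p) (Fin p) ℂ)).trace := by rw [hA1]
          _ = (n : ℂ) * (p : ℕ) := by
              rw [Matrix.trace_smul, Matrix.trace_one, smul_eq_mul, Fintype.card_fin]
        exact_mod_cast h5
      have hprodn : ∏ i, μ i = n ^ p := by
        have h5 : ((∏ i, μ i : ℝ) : ℂ) = (n : ℂ) ^ p := by
          have h6 : A.det = ((∏ i, μ i : ℝ) : ℂ) := by
            rw [hA.1.det_eq_prod_eigenvalues]; norm_cast
          rw [← h6]
          calc A.det = ((n : ℂ) • (1 : Matrix (Fin p) (Fin p) ℂ)).det := by rw [hA1]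
          _ = (n : ℂ) ^ p := by
              rw [Matrix.det_smul, Matrix.det_one, mul_one, Fintype.card_fin]
        exact_mod_cast h5
      have hlogsum : ∑ i, Real.log (μ i) = (p : ℝ) * Real.log n := by
        rw [← Real.log_prod fun i _ => (hμpos i).ne', hprodn, Real.log_pow]
      congr 1
      rw [Finset.sum_sub_distrib, ← Finset.mul_sum, hlogsum, hsum,
        Finset.sum_const, Finset.card_univ, Fintype.card_fin, nsmul_eq_mul]
      ring
end

section
/- (Proposition 6, likelihood ratio form.) Let p, K ≥ 1 be integers, n > p a real number, and B₁, …, B_K be p×p Hermitian positive definite complex matrices. For Hermitian positive definite Σ₁, …, Σ_K define L(Σ₁,…,Σ_K) = ∏_{i=1}^K det(B_i)^{n−p} exp(−Re tr(Σ_i^{−1} B_i)) / det(Σ_i)^n. Then the likelihood ratio Λ̃ = (sup over Hermitian positive definite Σ of L(Σ,…,Σ)) / (sup over Hermitian positive definite Σ₁,…,Σ_K of L(Σ₁,…,Σ_K)) satisfies Λ̃ = K^{pKn} ∏_{i=1}^K det(B_i)^n / det(∑_{i=1}^K B_i)^{Kn}; moreover both suprema are attained, at Σ = n^{−1}(1/K)∑_{i=1}^K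 B_i and at Σ_i = n^{−1} B_i respectively. -/
open Matrix
open scoped ComplexOrder

lemma aux_scalar_s16 {x m : ℝ} (hx : 0 < x) (hm : 0 < m) :
    x ^ m * Real.exp (-x) ≤ m ^ m * Real.exp (-m) := by
  rw [Real.rpow_def_of_pos hx, Real.rpow_def_of_pos hm, ← Real.exp_add, ← Real.exp_add,
    Real.exp_le_exp]
  have h := Real.log_le_sub_one_of_pos (div_pos hx hm)
  rw [Real.log_div hx.ne' hm.ne'] at h
  have h2 : m * (Real.log x - Real.log m) ≤ x - m := by
    calc m * (Real.log x - Real.log m) ≤ m * (x / m - 1) :=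
          mul_le_mul_of_nonneg_left h hm.le
      _ = x - m := by field_simp
  nlinarith

lemma aux_trace {q : ℕ} {A : Matrix (Fin q) (Fin q) ℂ} (hA : A.IsHermitian) :
    A.trace = ∑ i, (hA.eigenvalues i : ℂ) := by
  conv_lhs => rw [hA.spectral_theorem, Unitary.conjStarAlgAut_apply]
  rw [trace_mul_cycle]
  rw [Unitary.coe_star_mul_self,
    one_mul, trace_diagonal]
  rfl

open scoped MatrixOrder in
lemma key_le {q : ℕ} {A S : Matrix (Fin q) (Fin q) ℂ} (hA : A.PosDef) (hS : S.PosDef)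
    {m : ℝ} (hm : 0 < m) :
    Real.exp (-((S⁻¹ * A).trace.re)) / S.det.re ^ m
      ≤ Real.exp (-((q : ℝ) * m)) * m ^ ((q : ℝ) * m) / A.det.re ^ m := by
  classical
  set R : Matrix (Fin q) (Fin q) ℂ := CFC.sqrt A with hRdef
  have hR : R.PosSemidef := (CFC.sqrt_nonneg A).posSemidef
  have hRR : R * R = A := CFC.sqrt_mul_sqrt_self A hA.posSemidef.nonneg
  have hdetA : (0 : ℂ) < A.det := hA.det_pos
  have hdetRne : R.det ≠ 0 := by
    intro h
    have : A.det = 0 := by rw [← hRR, det_mul, h, mul_zero]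
    exact hdetA.ne' this
  have hRunit : IsUnit R := (isUnit_iff_isUnit_det R).2 hdetRne.isUnit
  set C : Matrix (Fin q) (Fin q) ℂ := R * S⁻¹ * R with hCdef
  have hC : C.PosDef := by
    refine PosDef.of_dotProduct_mulVec_pos ?_ (fun x hx => ?_)
    · have := (hS.inv.posSemidef).mul_mul_conjTranspose_same R
      rw [hR.isHermitian.eq] at this
      exact this.1
    · have hy : R *ᵥ x ≠ 0 := fun h => hx
        ((mulVec_injective_iff_isUnit.mpr hRunit) (by rw [h, mulVec_zero]))
      have : star x ⬝ᵥ (C *ᵥ x) = star (R *ᵥ x) ⬝ᵥ (S⁻¹ *ᵥ (R *ᵥ x)) := by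
        rw [star_mulVec, hR.isHermitian.eq, hCdef, ← mulVec_mulVec, ← mulVec_mulVec,
          dotProduct_mulVec]
      rw [this]
      exact hS.inv.dotProduct_mulVec_pos hy
  -- trace and det identities
  have htr : (S⁻¹ * A).trace = C.trace := by
    rw [hCdef, trace_mul_cycle, hRR, trace_mul_comm]
  have hAdet2 : R.det * R.det = A.det := by rw [← det_mul, hRR]
  have hdet : S.det * C.det = A.det := by
    have hdetSne : S.det ≠ 0 := hS.det_pos.ne'
    rw [hCdef, det_mul, det_mul, det_nonsing_inv, ← hAdet2]
    field_simp
    try ring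
    exact Ring.mul_inverse_cancel _ hdetSne.isUnit
  -- eigenvalues
  set μ : Fin q → ℝ := hC.1.eigenvalues with hμdef
  have hμ : ∀ i, 0 < μ i := hC.eigenvalues_pos
  have htr_re : (S⁻¹ * A).trace.re = ∑ i, μ i := by
    rw [htr, aux_trace hC.1, ← Complex.ofReal_sum, Complex.ofReal_re]
  have hdetC_re : C.det.re = ∏ i, μ i := by
    rw [hC.1.det_eq_prod_eigenvalues]
    norm_cast
  have hsre : 0 < S.det.re := (Complex.lt_def.mp hS.det_pos).1
  have hsim : S.det.im = 0 := (Complex.lt_def.mp hS.det_pos).2.symm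
  have hare : 0 < A.det.re := (Complex.lt_def.mp hA.det_pos).1
  have hcre : 0 < C.det.re := (Complex.lt_def.mp hC.det_pos).1
  have hcim : C.det.im = 0 := (Complex.lt_def.mp hC.det_pos).2.symm
  have hsc : S.det.re * C.det.re = A.det.re := by
    have := congrArg Complex.re hdet
    rwa [Complex.mul_re, hsim, hcim, mul_zero, sub_zero] at this
  -- main scalar product inequality
  have main : Real.exp (-(∑ i, μ i)) * (∏ i, μ i) ^ m
      ≤ Real.exp (-((q : ℝ) * m)) * m ^ ((q : ℝ) * m) := by
    have h1 : Real.exp (-(∑ i, μ i)) = ∏ i, Real.exp (-(μ i)) := by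
      rw [← Real.exp_sum, ← Finset.sum_neg_distrib]
    have h2 : (∏ i, μ i) ^ m = ∏ i, (μ i) ^ m :=
      (Real.finset_prod_rpow _ _ (fun i _ => (hμ i).le) m).symm
    have h3 : Real.exp (-((q : ℝ) * m)) = ∏ _i : Fin q, Real.exp (-m) := by
      rw [Finset.prod_const, Finset.card_univ, Fintype.card_fin, ← Real.exp_nat_mul]
      ring_nf
    have h4 : m ^ ((q : ℝ) * m) = ∏ _i : Fin q, m ^ m := by
      rw [Finset.prod_const, Finset.card_univ, Fintype.card_fin,
        ← Real.rpow_natCast (m ^ m) q, ← Real.rpow_mul hm.le]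
      ring_nf
    rw [h1, h2, h3, h4, ← Finset.prod_mul_distrib, ← Finset.prod_mul_distrib]
    refine Finset.prod_le_prod (fun i _ => ?_) (fun i _ => ?_)
    · exact mul_nonneg (Real.exp_nonneg _) (Real.rpow_nonneg (hμ i).le _)
    · rw [mul_comm (Real.exp (-(μ i))), mul_comm (Real.exp (-m))]
      exact aux_scalar_s16 (hμ i) hm
  -- assemble
  have hs_eq : S.det.re = A.det.re / C.det.re := by
    field_simp [hcre.ne'] at hsc ⊢; linarith [hsc]
  have hspow : S.det.re ^ m = A.det.re ^ m / C.det.re ^ m := by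
    rw [hs_eq, Real.div_rpow hare.le hcre.le]
  rw [htr_re, hspow, div_div_eq_mul_div, hdetC_re]
  gcongr

lemma smul_real_eq {q : ℕ} (r : ℝ) (A : Matrix (Fin q) (Fin q) ℂ) :
    r • A = ((r : ℂ)) • A := by
  ext i j; simp [Matrix.smul_apply, Complex.real_smul]

lemma key_eq {q : ℕ} {A : Matrix (Fin q) (Fin q) ℂ} (hA : A.PosDef) {m : ℝ} (hm : 0 < m) :
    Real.exp (-(((m⁻¹ • A : Matrix (Fin q) (Fin q) ℂ)⁻¹ * A).trace.re)) / (m⁻¹ • A).det.re ^ m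
      = Real.exp (-((q : ℝ) * m)) * m ^ ((q : ℝ) * m) / A.det.re ^ m := by
  have ha : 0 < A.det.re := (Complex.lt_def.mp hA.det_pos).1
  have hAdetne : A.det ≠ 0 := hA.det_pos.ne'
  have hmne : (m : ℂ) ≠ 0 := by exact_mod_cast hm.ne'
  have hsm : (m⁻¹ • A : Matrix (Fin q) (Fin q) ℂ) = ((m : ℂ))⁻¹ • A := by
    rw [smul_real_eq]; push_cast; rfl
  have hinv : (((m : ℂ))⁻¹ • A)⁻¹ = (m : ℂ) • A⁻¹ := by
    apply inv_eq_right_inv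
    rw [smul_mul_assoc, mul_smul_comm, smul_smul, mul_nonsing_inv _ hAdetne.isUnit,
      inv_mul_cancel₀ hmne, one_smul]
  have htr2 : (((m⁻¹ • A : Matrix (Fin q) (Fin q) ℂ))⁻¹ * A).trace.re = (q : ℝ) * m := by
    rw [hsm, hinv, smul_mul_assoc, nonsing_inv_mul _ hAdetne.isUnit, trace_smul, trace_one]
    simp [Complex.mul_re]
    ring
  have hdet2 : (m⁻¹ • A : Matrix (Fin q) (Fin q) ℂ).det.re = (m⁻¹) ^ q * A.det.re := by
    rw [hsm, det_smul]
    have h : ((m : ℂ)⁻¹) ^ q = ((m⁻¹ ^ q : ℝ) : ℂ) := by push_cast; ring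
    rw [Fintype.card_fin, h, Complex.re_ofReal_mul]
  rw [htr2, hdet2, Real.mul_rpow (by positivity) ha.le]
  have h3 : ((m⁻¹ : ℝ) ^ q) ^ m = (m ^ ((q : ℝ) * m))⁻¹ := by
    rw [inv_pow, ← Real.rpow_natCast m q, Real.inv_rpow (Real.rpow_nonneg hm.le _),
      ← Real.rpow_mul hm.le]
  rw [h3]
  have h4 : (0:ℝ) < m ^ ((q : ℝ) * m) := Real.rpow_pos_of_pos hm _
  have h5 : (0:ℝ) < A.det.re ^ m := Real.rpow_pos_of_pos ha _
  field_simp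

lemma posdef_smul {q : ℕ} {A : Matrix (Fin q) (Fin q) ℂ} (hA : A.PosDef) {r : ℝ} (hr : 0 < r) :
    (r • A).PosDef := by
  rw [smul_real_eq]
  refine PosDef.of_dotProduct_mulVec_pos ?_ (fun x hx => ?_)
  · show (((r : ℂ)) • A)ᴴ = _
    rw [conjTranspose_smul, hA.1.eq]
    congr 1
    simp [Complex.star_def, Complex.conj_ofReal]
  · rw [smul_mulVec, dotProduct_smul, smul_eq_mul]
    exact mul_pos (Complex.zero_lt_real.mpr hr) (hA.dotProduct_mulVec_pos hx)

lemma sum_mulVec' {q K : ℕ} (B : Fin K → Matrix (Fin q) (Fin q) ℂ) (x : Fin q → ℂ) :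
    (∑ i, B i) *ᵥ x = ∑ i, B i *ᵥ x := by
  ext j
  simp only [mulVec, dotProduct, Matrix.sum_apply, Finset.sum_mul, Finset.sum_apply]
  exact Finset.sum_comm

lemma posdef_sum {q K : ℕ} (hK : 0 < K) (B : Fin K → Matrix (Fin q) (Fin q) ℂ)
    (hB : ∀ i, (B i).PosDef) : (∑ i, B i).PosDef := by
  have hne : (Finset.univ : Finset (Fin K)).Nonempty := ⟨⟨0, hK⟩, Finset.mem_univ _⟩
  refine PosDef.of_dotProduct_mulVec_pos ?_ (fun x hx => ?_)
  · show (∑ i, B i)ᴴ = _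
    rw [conjTranspose_sum]
    exact Finset.sum_congr rfl fun i _ => (hB i).1.eq
  · rw [sum_mulVec']
    have h : star x ⬝ᵥ (∑ i, B i *ᵥ x) = ∑ i, star x ⬝ᵥ (B i *ᵥ x) := by
      simp only [dotProduct, Finset.sum_apply, Finset.mul_sum]
      exact Finset.sum_comm
    rw [h]
    exact Finset.sum_pos (fun i _ => (hB i).dotProduct_mulVec_pos hx) hne

theorem stmt_16 (p K : ℕ) (hp : 1 ≤ p) (hK : 1 ≤ K)
    (n : ℝ) (hn : (p : ℝ) < n)
    (B : Fin K → Matrix (Fin p) (Fin p) ℂ) (hB : ∀ i, (B i).PosDef)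
    (L : (Fin K → Matrix (Fin p) (Fin p) ℂ) → ℝ)
    (hL : ∀ Sgs : Fin K → Matrix (Fin p) (Fin p) ℂ,
      L Sgs = ∏ i, (B i).det.re ^ (n - (p : ℝ)) *
        Real.exp (-(((Sgs i)⁻¹ * B i).trace.re)) / (Sgs i).det.re ^ n) :
    IsGreatest {x : ℝ | ∃ Sg : Matrix (Fin p) (Fin p) ℂ, Sg.PosDef ∧ x = L (fun _ => Sg)}
      (L (fun _ => n⁻¹ • ((K : ℝ)⁻¹ • ∑ i, B i))) ∧
    IsGreatest {x : ℝ | ∃ Sgs : Fin K → Matrix (Fin p) (Fin p) ℂ,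
        (∀ i, (Sgs i).PosDef) ∧ x = L Sgs}
      (L (fun i => n⁻¹ • B i)) ∧
    L (fun _ => n⁻¹ • ((K : ℝ)⁻¹ • ∑ i, B i)) / L (fun i => n⁻¹ • B i) =
      (K : ℝ) ^ ((p : ℝ) * (K : ℝ) * n) * (∏ i, (B i).det.re ^ n) /
        (∑ i, B i).det.re ^ ((K : ℝ) * n) := by
  have hp0 : (0:ℝ) ≤ (p:ℝ) := Nat.cast_nonneg p
  have hn0 : (0:ℝ) < n := lt_of_le_of_lt hp0 hn
  have hK0 : (0:ℝ) < (K:ℝ) := by exact_mod_cast hK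
  have hKn : (0:ℝ) < (K:ℝ) * n := mul_pos hK0 hn0
  have hS : (∑ i, B i).PosDef := posdef_sum hK B hB
  have hSd : 0 < (∑ i, B i).det.re := (Complex.lt_def.mp hS.det_pos).1
  have hBd : ∀ i, 0 < (B i).det.re := fun i => (Complex.lt_def.mp (hB i).det_pos).1
  have hci : ∀ i, 0 < (B i).det.re ^ (n - (p:ℝ)) := fun i => Real.rpow_pos_of_pos (hBd i) _
  have hC0 : 0 < ∏ i, (B i).det.re ^ (n - (p:ℝ)) := Finset.prod_pos fun i _ => hci i
  -- Step A : value of L on a constant family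
  have stepA : ∀ (Sg : Matrix (Fin p) (Fin p) ℂ), Sg.PosDef →
      L (fun _ => Sg) = (∏ i, (B i).det.re ^ (n - (p:ℝ))) *
        (Real.exp (-((Sg⁻¹ * ∑ i, B i).trace.re)) / Sg.det.re ^ ((K:ℝ) * n)) := by
    intro Sg hSg
    have hd : 0 < Sg.det.re := (Complex.lt_def.mp hSg.det_pos).1
    have hsum : (Sg⁻¹ * ∑ i, B i).trace.re = ∑ i, ((Sg⁻¹ * B i).trace.re) := by
      rw [Finset.mul_sum, trace_sum, Complex.re_sum]
    have hpow : Sg.det.re ^ ((K:ℝ) * n) = ∏ _i : Fin K, Sg.det.re ^ n := by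
      rw [Finset.prod_const, Finset.card_univ, Fintype.card_fin,
        ← Real.rpow_natCast (Sg.det.re ^ n) K, ← Real.rpow_mul hd.le, mul_comm n (K:ℝ)]
    rw [hL, hsum, hpow]
    rw [Finset.prod_div_distrib, Finset.prod_mul_distrib, ← Real.exp_sum, mul_div_assoc,
      Finset.sum_neg_distrib]
  -- the optimum for the common-Σ problem
  have hopt1eq : (n⁻¹ • ((K:ℝ)⁻¹ • ∑ i, B i) : Matrix (Fin p) (Fin p) ℂ)
      = ((K:ℝ) * n)⁻¹ • ∑ i, B i := by
    rw [smul_smul]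
    congr 1
    rw [mul_inv]
    ring
  have hopt1pos : (n⁻¹ • ((K:ℝ)⁻¹ • ∑ i, B i) : Matrix (Fin p) (Fin p) ℂ).PosDef :=
    posdef_smul (posdef_smul hS (inv_pos.mpr hK0)) (inv_pos.mpr hn0)
  have hval1 : L (fun _ => n⁻¹ • ((K:ℝ)⁻¹ • ∑ i, B i)) =
      (∏ i, (B i).det.re ^ (n - (p:ℝ))) *
        (Real.exp (-((p:ℝ) * ((K:ℝ) * n))) * ((K:ℝ) * n) ^ ((p:ℝ) * ((K:ℝ) * n)) /
          (∑ i, B i).det.re ^ ((K:ℝ) * n)) := by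
    rw [stepA _ hopt1pos, hopt1eq, key_eq hS hKn]
  -- first IsGreatest
  have G1 : IsGreatest {x : ℝ | ∃ Sg : Matrix (Fin p) (Fin p) ℂ, Sg.PosDef ∧
      x = L (fun _ => Sg)} (L (fun _ => n⁻¹ • ((K : ℝ)⁻¹ • ∑ i, B i))) := by
    constructor
    · exact ⟨_, hopt1pos, rfl⟩
    · rintro x ⟨Sg, hSg, rfl⟩
      rw [stepA Sg hSg, hval1]
      exact mul_le_mul_of_nonneg_left (key_le hS hSg hKn) hC0.le
  -- values of L on families
  have hval2 : L (fun i => n⁻¹ • B i) =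
      ∏ i, (B i).det.re ^ (n - (p:ℝ)) *
        (Real.exp (-((p:ℝ) * n)) * n ^ ((p:ℝ) * n) / (B i).det.re ^ n) := by
    rw [hL]
    refine Finset.prod_congr rfl fun i _ => ?_
    rw [mul_div_assoc, key_eq (hB i) hn0]
  have G2 : IsGreatest {x : ℝ | ∃ Sgs : Fin K → Matrix (Fin p) (Fin p) ℂ,
      (∀ i, (Sgs i).PosDef) ∧ x = L Sgs} (L (fun i => n⁻¹ • B i)) := by
    constructor
    · exact ⟨_, fun i => posdef_smul (hB i) (inv_pos.mpr hn0), rfl⟩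
    · rintro x ⟨Sgs, hSgs, rfl⟩
      rw [hL Sgs, hval2]
      refine Finset.prod_le_prod (fun i _ => ?_) (fun i _ => ?_)
      · have hd : 0 < (Sgs i).det.re := (Complex.lt_def.mp (hSgs i).det_pos).1
        exact div_nonneg (mul_nonneg (hci i).le (Real.exp_nonneg _))
          (Real.rpow_nonneg hd.le _)
      · rw [mul_div_assoc]
        exact mul_le_mul_of_nonneg_left (key_le (hB i) (hSgs i) hn0) (hci i).le
  refine ⟨G1, G2, ?_⟩
  -- ratio computation
  have hval2' : L (fun i => n⁻¹ • B i) =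
      (∏ i, (B i).det.re ^ (n - (p:ℝ))) *
        ((Real.exp (-((p:ℝ) * n)) * n ^ ((p:ℝ) * n)) ^ K / ∏ i, (B i).det.re ^ n) := by
    rw [hval2, Finset.prod_mul_distrib, Finset.prod_div_distrib, Finset.prod_const,
      Finset.card_univ, Fintype.card_fin]
  have hE : Real.exp (-((p:ℝ) * ((K:ℝ) * n))) * ((K:ℝ) * n) ^ ((p:ℝ) * ((K:ℝ) * n)) =
      (K:ℝ) ^ ((p:ℝ) * (K:ℝ) * n) *
        (Real.exp (-((p:ℝ) * n)) * n ^ ((p:ℝ) * n)) ^ K := by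
    rw [mul_pow, ← Real.exp_nat_mul, ← Real.rpow_natCast (n ^ ((p:ℝ) * n)) K,
      ← Real.rpow_mul hn0.le, Real.mul_rpow hK0.le hn0.le]
    rw [show ((K:ℕ):ℝ) * (-((p:ℝ) * n)) = -((p:ℝ) * ((K:ℝ) * n)) by push_cast; ring]
    rw [show (p:ℝ) * n * ((K:ℕ):ℝ) = (p:ℝ) * ((K:ℝ) * n) by push_cast; ring]
    rw [show (p:ℝ) * (K:ℝ) * n = (p:ℝ) * ((K:ℝ) * n) by ring]
    ring
  rw [hval1, hval2', hE]
  have hD : 0 < ∏ i, (B i).det.re ^ n := Finset.prod_pos fun i _ => Real.rpow_pos_of_pos (hBd i) _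
  have hE2 : 0 < (Real.exp (-((p:ℝ) * n)) * n ^ ((p:ℝ) * n)) ^ K :=
    pow_pos (mul_pos (Real.exp_pos _) (Real.rpow_pos_of_pos hn0 _)) K
  have hSdp : 0 < (∑ i, B i).det.re ^ ((K:ℝ) * n) := Real.rpow_pos_of_pos hSd _
  field_simp
end
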